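/- arXiv:0710.5263 — 4 statements merged into one kernel-verified Lean document; each statement's English description precedes it below -/
import Mathlib

section
/- Let G be a finite group and let g ≥ 1 be an integer. Then the number of 2g-tuples (s₁,t₁,…,s_g,t_g) ∈ G^{2g} satisfying [s₁,t₁][s₂,t₂]⋯[s_g,t_g] = 1 equals, as a complex number, the sum over all isomorphism classes λ of irreducible complex representations of G of (|G| / dim λ)^{2g−1} · (dim λ). Equivalently, |Hom(π₁(Σ_g), G)| / |G| = Σ_λ (dim λ / |G|)^{2−2g}. -/
/-!
For an irreducible representation `V` of dimension `d`, Schur's lemma makes both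
`∑ₜ ρ(t) A ρ(t)⁻¹` and `∑ₛ χ(s⁻¹) ρ(s)` scalars, and comparing traces (using `‖χ‖ = 1`)
gives `∑_{s,t} ρ([s,t]) = (|G|/d)²`. Iterating, `∑ₓ χ([s₁,t₁]⋯[s_g,t_g]) = (|G|/d)^{2g} d`.
The number of solutions of `[s₁,t₁]⋯[s_g,t_g] = 1` is obtained by summing the column
orthogonality relation `∑_λ d_λ χ_λ(z) = |G| δ_{z,1}` over all tuples; that relation comes from
decomposing (by Maschke) the character of the regular representation into irreducible
characters, whose multiplicities are the `d_λ` by orthonormality.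
-/

open CategoryTheory Module
open scoped commutatorElement

universe u

theorem div_pow_succ_mul_div {K : Type*} [DivisionRing K] {N d : K} (hN : N ≠ 0) (hd : d ≠ 0)
    (n : ℕ) : (N / d) ^ (n + 1) * d / N = (N / d) ^ n := by
  rw [pow_succ, mul_assoc, div_mul_cancel₀ N hd, mul_div_cancel_right₀ _ hN]

namespace Subrepresentation

variable {k G V : Type*} [Field k] [Group G] [AddCommGroup V] [Module k V]
  {ρ : Representation k G V}

theorem isCompl_toSubmodule {σ τ : Subrepresentation ρ} (h : IsCompl σ τ) :
    IsCompl σ.toSubmodule τ.toSubmodule :=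
  ⟨disjoint_iff.mpr (congrArg toSubmodule h.inf_eq_bot),
    codisjoint_iff.mpr (congrArg toSubmodule h.sup_eq_top)⟩

theorem finrank_lt_of_ne_top [FiniteDimensional k V] {σ : Subrepresentation ρ} (h : σ ≠ ⊤) :
    finrank k σ.toSubmodule < finrank k V :=
  Submodule.finrank_lt fun h' => h (toSubmodule_injective h')

end Subrepresentation

namespace Representation

variable {k G V : Type*} [Field k] [Group G]

theorem character_eq_add_of_isCompl [AddCommGroup V] [Module k V] [FiniteDimensional k V]
    {ρ : Representation k G V} {σ τ : Subrepresentation ρ} (h : IsCompl σ τ) :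
    ρ.character = σ.toRepresentation.character + τ.toRepresentation.character := by
  ext g
  let N : Bool → Submodule k V := fun b => cond b σ.toSubmodule τ.toSubmodule
  have hN : DirectSum.IsInternal N :=
    (DirectSum.isInternal_submodule_iff_isCompl N (i := true) (j := false) (by simp)
      (by ext b; cases b <;> simp)).mpr (Subrepresentation.isCompl_toSubmodule h)
  have hmaps : ∀ b, Set.MapsTo (ρ g) (N b) (N b) := fun b => by
    cases b
    · exact fun v hv => τ.apply_mem_toSubmodule g hv
    · exact fun v hv => σ.apply_mem_toSubmodule g hv
  rw [character, LinearMap.trace_eq_sum_trace_restrict hN hmaps, Fintype.sum_bool]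
  rfl

theorem character_leftRegular [Fintype G] [DecidableEq G] (g : G) :
    (leftRegular k G).character g = if g = 1 then (Nat.card G : k) else 0 := by
  rw [character, LinearMap.trace_eq_matrix_trace k (MonoidAlgebra.basis G k), Matrix.trace]
  split_ifs with hg <;> simp [LinearMap.toMatrix_apply, MonoidAlgebra.basis, hg]

end Representation

def commutatorProduct {G : Type*} [Group G] {n : ℕ} (x : Fin n → G × G) : G :=
  (List.ofFn fun i => ⁅(x i).1, (x i).2⁆).prod

theorem commutatorProduct_cons {G : Type*} [Group G] {n : ℕ} (p : G × G) (x : Fin n → G × G) :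
    commutatorProduct (Fin.cons p x : Fin (n + 1) → G × G) = ⁅p.1, p.2⁆ * commutatorProduct x := by
  simp [commutatorProduct, List.ofFn_succ]

namespace FDRep

theorem ρ_mul_conj {k G : Type*} [Field k] [Group G] (V : FDRep k G) (s t : G)
    (A : Module.End k V) :
    V.ρ s * (V.ρ t * A * V.ρ t⁻¹) = V.ρ (s * t) * A * V.ρ (s * t)⁻¹ * V.ρ s := by
  have h : V.ρ s⁻¹ * V.ρ s = 1 := by rw [← map_mul, inv_mul_cancel, map_one]
  simp only [mul_inv_rev, map_mul, mul_assoc, h, mul_one]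

variable {k G : Type u} [Field k] [IsAlgClosed k] [CharZero k] [Group G] [Fintype G]

theorem simple_of_isIrreducible {V : Type u} [AddCommGroup V] [Module k V]
    [FiniteDimensional k V] (ρ : Representation k G V) [ρ.IsIrreducible] :
    Simple (FDRep.of ρ) := by
  have : Invertible (Nat.card G : k) := invertibleOfNonzero (NeZero.ne _)
  have h := ρ.char_orthonormal ρ
  rw [if_pos ⟨.refl ρ⟩, inv_mul_eq_one₀ (NeZero.ne _)] at h
  exact (simple_iff_char_is_norm_one _).mpr h.symm

theorem exists_character_eq_sum {ι : Type*} [Fintype ι] (Irr : ι → FDRep k G)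
    (hcomplete : ∀ V : FDRep k G, Simple V → ∃ i, Nonempty (V ≅ Irr i))
    {V : Type u} [AddCommGroup V] [Module k V] [FiniteDimensional k V]
    (ρ : Representation k G V) :
    ∃ c : ι → ℕ, ∀ g, ρ.character g = ∑ i, c i * (Irr i).character g := by
  classical
  induction h : finrank k V using Nat.strong_induction_on generalizing V with
  | _ n ih =>
  by_cases hirr : ρ.IsIrreducible
  · obtain ⟨i, ⟨e⟩⟩ := hcomplete _ (simple_of_isIrreducible ρ)
    refine ⟨Pi.single i 1, fun g => ?_⟩
    rw [show ρ.character = (of ρ).character from rfl, char_iso e]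
    simp [Pi.single_apply]
  rcases subsingleton_or_nontrivial (Subrepresentation ρ) with hV | hV
  · have : Subsingleton V := (Submodule.subsingleton_iff k).mp <| subsingleton_iff_bot_eq_top.mp <|
      congrArg Subrepresentation.toSubmodule (Subsingleton.elim (⊥ : Subrepresentation ρ) ⊤)
    refine ⟨0, fun g => ?_⟩
    rw [Representation.character, Subsingleton.elim (ρ g) 0]
    simp
  obtain ⟨σ, hbot, htop⟩ : ∃ σ : Subrepresentation ρ, σ ≠ ⊥ ∧ σ ≠ ⊤ := by
    by_contra! hσ
    exact hirr ⟨fun σ => (eq_or_ne σ ⊥).imp_right (hσ σ)⟩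
  obtain ⟨τ, hτ⟩ := exists_isCompl σ
  have hτtop : τ ≠ ⊤ := fun h => hbot (eq_bot_of_isCompl_top (h ▸ hτ))
  obtain ⟨a, ha⟩ := ih _ (h ▸ σ.finrank_lt_of_ne_top htop) σ.toRepresentation rfl
  obtain ⟨b, hb⟩ := ih _ (h ▸ τ.finrank_lt_of_ne_top hτtop) τ.toRepresentation rfl
  refine ⟨a + b, fun g => ?_⟩
  rw [ρ.character_eq_add_of_isCompl hτ, Pi.add_apply, ha, hb, ← Finset.sum_add_distrib]
  simp only [Pi.add_apply, Nat.cast_add, add_mul]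

section Simple

variable (V : FDRep k G) [Simple V]

theorem character_one_ne_zero : V.character 1 ≠ 0 := by
  intro h
  have : Subsingleton V := by
    rw [char_one, Nat.cast_eq_zero] at h
    exact finrank_zero_iff.mp h
  have hnorm := (simple_iff_char_is_norm_one V).mp inferInstance
  simp only [character, Subsingleton.elim (V.ρ _) 0, map_zero, mul_zero,
    Finset.sum_const_zero] at hnorm
  exact (NeZero.ne (Nat.card G : k)) hnorm.symm

theorem eq_smul_one_of_commute {f : Module.End k V} (hf : ∀ g, Commute f (V.ρ g)) :
    f = (LinearMap.trace k V f / V.character 1) • 1 := by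
  obtain ⟨c, hc⟩ := endomorphism_simple_eq_smul_id (X := V) k
    (Action.Hom.mk (FGModuleCat.ofHom f) fun g => FGModuleCat.hom_ext (hf g))
  have hfc : f = c • 1 := (congrArg (fun φ => φ.hom.hom.hom) hc).symm
  rw [hfc, map_smul, LinearMap.trace_one, char_one, smul_eq_mul,
    mul_div_cancel_right₀ c (by simpa [char_one] using character_one_ne_zero V)]

theorem sum_conj_eq_smul_one (A : Module.End k V) :
    ∑ t : G, V.ρ t * A * V.ρ t⁻¹
      = (Nat.card G * LinearMap.trace k V A / V.character 1) • 1 := by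
  have hcomm : ∀ s, Commute (∑ t : G, V.ρ t * A * V.ρ t⁻¹) (V.ρ s) := fun s => by
    rw [Commute, SemiconjBy, Finset.mul_sum, Finset.sum_mul]
    simp_rw [ρ_mul_conj]
    exact (Fintype.sum_equiv (Equiv.mulLeft s) _ _ fun t => rfl).symm
  have htrace : LinearMap.trace k V (∑ t : G, V.ρ t * A * V.ρ t⁻¹)
      = Nat.card G * LinearMap.trace k V A := by
    have h : ∀ t : G, LinearMap.trace k V (V.ρ t * A * V.ρ t⁻¹) = LinearMap.trace k V A := by
      intro t
      rw [LinearMap.trace_mul_cycle, ← map_mul, inv_mul_cancel, map_one, one_mul]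
    simp [map_sum, h]
  rw [eq_smul_one_of_commute V hcomm, htrace]

theorem sum_character_inv_smul_ρ :
    ∑ s : G, V.character s⁻¹ • V.ρ s = (Nat.card G / V.character 1) • 1 := by
  have hcomm : ∀ t, Commute (∑ s : G, V.character s⁻¹ • V.ρ s) (V.ρ t) := fun t => by
    rw [Commute, SemiconjBy, Finset.mul_sum, Finset.sum_mul]
    refine (Fintype.sum_equiv (MulAut.conj t).toEquiv _ _ fun s => ?_).symm
    have hρ : V.ρ t * V.ρ s = V.ρ (t * s * t⁻¹) * V.ρ t := by
      rw [← map_mul, ← map_mul, inv_mul_cancel_right]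
    simp only [MulEquiv.toEquiv_eq_coe, MulEquiv.coe_toEquiv, MulAut.conj_apply, smul_mul_assoc,
      mul_smul_comm, hρ, conj_inv, char_conj]
  have htrace : LinearMap.trace k V (∑ s : G, V.character s⁻¹ • V.ρ s) = Nat.card G := by
    simp only [map_sum, map_smul, smul_eq_mul]
    rw [← (simple_iff_char_is_norm_one V).mp inferInstance]
    exact Finset.sum_congr rfl fun s _ => mul_comm _ _
  rw [eq_smul_one_of_commute V hcomm, htrace]

theorem sum_ρ_commutatorElement :
    ∑ p : G × G, V.ρ ⁅p.1, p.2⁆ = ((Nat.card G / V.character 1) ^ 2) • 1 := by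
  have hinner : ∀ s : G, ∑ t : G, V.ρ ⁅s, t⁆
      = (Nat.card G / V.character 1) • V.character s⁻¹ • V.ρ s := fun s => by
    have h : ∀ t, V.ρ ⁅s, t⁆ = V.ρ s * (V.ρ t * V.ρ s⁻¹ * V.ρ t⁻¹) := fun t => by
      simp only [commutatorElement_def, map_mul, mul_assoc]
    rw [Finset.sum_congr rfl fun t _ => h t, ← Finset.mul_sum, sum_conj_eq_smul_one,
      mul_smul_comm, mul_one, smul_smul, div_mul_eq_mul_div]
    rfl
  rw [Fintype.sum_prod_type]
  simp_rw [hinner]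
  rw [← Finset.smul_sum, sum_character_inv_smul_ρ, smul_smul, sq]

theorem sum_ρ_commutatorProduct (n : ℕ) :
    ∑ x : Fin n → G × G, V.ρ (commutatorProduct x)
      = ((Nat.card G / V.character 1) ^ (2 * n)) • 1 := by
  induction n with
  | zero => simp [commutatorProduct]
  | succ n ih =>
    rw [← (Fin.consEquiv fun _ => G × G).sum_comp, Fintype.sum_prod_type]
    simp only [Fin.consEquiv, Equiv.coe_fn_mk, commutatorProduct_cons, map_mul,
      ← Finset.mul_sum, ih, ← Finset.sum_mul, sum_ρ_commutatorElement, smul_mul_smul_comm, mul_one,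
      ← pow_add]
    ring_nf

theorem sum_character_commutatorProduct (n : ℕ) :
    ∑ x : Fin n → G × G, V.character (commutatorProduct x)
      = (Nat.card G / V.character 1) ^ (2 * n) * V.character 1 := by
  have h := congrArg (LinearMap.trace k V) (sum_ρ_commutatorProduct V n)
  rwa [map_sum, map_smul, LinearMap.trace_one, ← char_one, smul_eq_mul] at h

end Simple

section CompleteFamily

variable {ι : Type*} {Irr : ι → FDRep k G}
  (hsimple : ∀ i, Simple (Irr i)) (hirredundant : ∀ i j : ι, Nonempty (Irr i ≅ Irr j) → i = j)
include hsimple hirredundant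

theorem sum_character_mul_character_inv [DecidableEq ι] (i j : ι) :
    ∑ g, (Irr i).character g * (Irr j).character g⁻¹ = if i = j then (Nat.card G : k) else 0 := by
  classical
  have : Invertible (Nat.card G : k) := invertibleOfNonzero (NeZero.ne _)
  have h := char_orthonormal (Irr i) (Irr j)
  rw [inv_mul_eq_iff_eq_mul₀ (NeZero.ne _)] at h
  rw [h, mul_ite, mul_one, mul_zero]
  exact if_congr ⟨hirredundant i j, fun h => h ▸ ⟨Iso.refl _⟩⟩ rfl rfl

variable [Fintype ι] (hcomplete : ∀ V : FDRep k G, Simple V → ∃ i, Nonempty (V ≅ Irr i))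
include hcomplete

theorem sum_character_one_mul_character [DecidableEq G] (g : G) :
    ∑ i, (Irr i).character 1 * (Irr i).character g = if g = 1 then (Nat.card G : k) else 0 := by
  classical
  obtain ⟨c, hc⟩ := exists_character_eq_sum Irr hcomplete (Representation.leftRegular k G)
  have hmult : ∀ j, (c j : k) = (Irr j).character 1 := fun j => by
    have hreg : ∑ w, (Representation.leftRegular k G).character w * (Irr j).character w⁻¹
        = Nat.card G * (Irr j).character 1 := by
      simp [Representation.character_leftRegular]
    have hdecomp : ∑ w, (Representation.leftRegular k G).character w * (Irr j).character w⁻¹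
        = Nat.card G * c j := by
      simp_rw [hc, Finset.sum_mul, mul_assoc]
      rw [Finset.sum_comm]
      simp_rw [← Finset.mul_sum, sum_character_mul_character_inv hsimple hirredundant]
      simp [mul_comm]
    exact mul_left_cancel₀ (NeZero.ne _) (hdecomp.symm.trans hreg)
  simp_rw [← hmult, ← hc, Representation.character_leftRegular]

theorem card_commutatorProduct_eq_one_mul_card (n : ℕ) :
    (Nat.card {x : Fin n → G × G // commutatorProduct x = 1} : k) * Nat.card G
      = ∑ i, (Nat.card G / (Irr i).character 1) ^ (2 * n) * (Irr i).character 1 ^ 2 := by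
  classical
  calc (Nat.card {x : Fin n → G × G // commutatorProduct x = 1} : k) * Nat.card G
      = ∑ x : Fin n → G × G, if commutatorProduct x = 1 then (Nat.card G : k) else 0 := by
        rw [Finset.sum_ite, Finset.sum_const_zero, add_zero, Finset.sum_const, nsmul_eq_mul,
          Nat.card_eq_fintype_card (α := Subtype _), Fintype.card_subtype]
    _ = ∑ x : Fin n → G × G, ∑ i, (Irr i).character 1 * (Irr i).character (commutatorProduct x) := by
        simp_rw [sum_character_one_mul_character hsimple hirredundant hcomplete]
    _ = ∑ i, (Nat.card G / (Irr i).character 1) ^ (2 * n) * (Irr i).character 1 ^ 2 := by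
        rw [Finset.sum_comm]
        simp_rw [← Finset.mul_sum, sum_character_commutatorProduct]
        exact Finset.sum_congr rfl fun i _ => by ring

end CompleteFamily

end FDRep

/-- **Counting formula.** For a finite group `G` and `g ≥ 1`, the number of `2g`-tuples
`(s₁,t₁,…,s_g,t_g) ∈ G^{2g}` with `[s₁,t₁]⋯[s_g,t_g] = 1` equals, as a complex number,
`Σ_{λ ∈ Ĝ} (|G|/dim λ)^{2g-1} · dim λ`; equivalently `|Hom(π₁(Σ_g),G)|/|G| =
Σ_{λ ∈ Ĝ} (dim λ/|G|)^{2-2g}`.  Here `Ĝ` is encoded by a complete irredundant family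
`Irr : ι → FDRep ℂ G` of irreducible complex representations of `G`, and
`dim λ = χ_λ(1)`. -/
theorem counting_formula
    (G : Type) [Group G] [Fintype G]
    (ι : Type) [Fintype ι] (Irr : ι → FDRep ℂ G)
    (hsimple : ∀ i, Simple (Irr i))
    (hirredundant : ∀ i j : ι, Nonempty (Irr i ≅ Irr j) → i = j)
    (hcomplete : ∀ V : FDRep ℂ G, Simple V → ∃ i, Nonempty (V ≅ Irr i))
    (g : ℕ) (hg : 1 ≤ g) :
    ((Nat.card {x : Fin g → G × G //
        (List.ofFn fun i => (x i).1 * (x i).2 * ((x i).1)⁻¹ * ((x i).2)⁻¹).prod = 1} : ℕ) : ℂ)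
      = ∑ i : ι, ((Fintype.card G : ℂ) / (Irr i).character 1) ^ (2 * g - 1)
          * (Irr i).character 1
    ∧
    ((Nat.card {x : Fin g → G × G //
        (List.ofFn fun i => (x i).1 * (x i).2 * ((x i).1)⁻¹ * ((x i).2)⁻¹).prod = 1} : ℕ) : ℂ)
        / (Fintype.card G : ℂ)
      = ∑ i : ι, ((Irr i).character 1 / (Fintype.card G : ℂ)) ^ (2 - 2 * (g : ℤ)) := by
  have hcard : (Fintype.card G : ℂ) ≠ 0 := Nat.cast_ne_zero.mpr Fintype.card_ne_zero
  have hN := FDRep.card_commutatorProduct_eq_one_mul_card hsimple hirredundant hcomplete g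
  rw [Nat.card_eq_fintype_card (α := G), ← eq_div_iff hcard, Finset.sum_div] at hN
  obtain ⟨m, rfl⟩ : ∃ m, g = m + 1 := ⟨g - 1, by omega⟩
  have hterm : ∀ i, ((Fintype.card G : ℂ) / (Irr i).character 1) ^ (2 * (m + 1))
      * (Irr i).character 1 ^ 2 / Fintype.card G
      = ((Fintype.card G : ℂ) / (Irr i).character 1) ^ (2 * m + 1) * (Irr i).character 1 := by
    intro i
    rw [show 2 * (m + 1) = 2 * m + 1 + 1 by ring, sq, ← mul_assoc, mul_div_right_comm,
      div_pow_succ_mul_div hcard (FDRep.character_one_ne_zero (Irr i))]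
  change ((Nat.card {x : Fin (m + 1) → G × G // commutatorProduct x = 1} : ℕ) : ℂ) = _ ∧
    ((Nat.card {x : Fin (m + 1) → G × G // commutatorProduct x = 1} : ℕ) : ℂ) / _ = _
  simp only [hN, hterm, Finset.sum_div, show 2 * (m + 1) - 1 = 2 * m + 1 by omega,
    div_pow_succ_mul_div hcard (FDRep.character_one_ne_zero (Irr _)),
    show (2 : ℤ) - 2 * ((m + 1 : ℕ) : ℤ) = -((2 * m : ℕ) : ℤ) by push_cast; ring,
    zpow_neg, zpow_natCast, ← inv_pow, inv_div, and_self]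
end

section
/- Let G be a finite group, λ an irreducible complex representation of G with character χ_λ, and w ∈ G. Then (dim λ / |G|) · Σ_{s ∈ G} Σ_{t ∈ G} χ_λ(s t s⁻¹ t⁻¹ w⁻¹) = (|G| / dim λ) · χ_λ(w⁻¹). -/
/-!
Schur's lemma makes the class sum `∑ₜ ρ(t x t⁻¹)` act on an irreducible `V` as the scalar
`|G| χ(x) / dim V`, so `dim V · ∑ₜ χ(t x t⁻¹ y) = |G| χ(x) χ(y)`. With `x = t`, `y = t⁻¹ w⁻¹`
this collapses the double sum to the convolution `∑ₜ χ(t) χ(t⁻¹ w⁻¹)`. Multiplying the same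
identity by `χ(x⁻¹)` and summing over `x`, orthonormality of characters evaluates that
convolution as `|G| χ(w⁻¹) / dim V`.
-/

open CategoryTheory Finset

namespace Representation

variable {k G V : Type*} [CommSemiring k] [Group G] [Fintype G] [AddCommMonoid V] [Module k V]

theorem commute_sum_conj (ρ : Representation k G V) (A : Module.End k V) (g : G) :
    Commute (∑ t : G, ρ t * A * ρ t⁻¹) (ρ g) := by
  rw [Commute, SemiconjBy, sum_mul, mul_sum,
    ← Equiv.sum_comp (Equiv.mulLeft g) (fun t => ρ t * A * ρ t⁻¹ * ρ g)]
  refine sum_congr rfl fun t _ => ?_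
  simp only [Equiv.coe_mulLeft, mul_inv_rev, map_mul, mul_assoc, ← map_mul ρ g⁻¹,
    inv_mul_cancel, map_one, mul_one]

end Representation

namespace FDRep

variable {k G : Type*} [Field k] [Group G] (V : FDRep k G) [Simple V]

theorem finrank_ne_zero_of_simple : Module.finrank k V ≠ 0 := fun h =>
  id_nonzero V (by
    have := Module.finrank_zero_iff.mp h
    ext v
    exact Subsingleton.elim _ _)

theorem finrank_smul_eq_trace_smul_one [IsAlgClosed k] {T : Module.End k V}
    (hT : ∀ g, Commute T (V.ρ g)) :
    (Module.finrank k V : k) • T = LinearMap.trace k V T • 1 := by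
  let f : V ⟶ V :=
    ⟨FGModuleCat.ofHom T, fun g => by ext v; exact LinearMap.congr_fun (hT g) v⟩
  obtain ⟨c, hc⟩ := endomorphism_simple_eq_smul_id k f
  have hTc : T = c • 1 := congrArg (fun φ : V ⟶ V => φ.hom.hom.hom) hc.symm
  rw [hTc, map_smul, LinearMap.trace_one, smul_smul, smul_eq_mul, mul_comm]

variable [Fintype G] [IsAlgClosed k]

theorem finrank_mul_sum_char_conj_mul (x y : G) :
    (Module.finrank k V : k) * ∑ t : G, V.character (t * x * t⁻¹ * y)
      = Fintype.card G * V.character x * V.character y := by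
  set T := ∑ t : G, V.ρ t * V.ρ x * V.ρ t⁻¹
  have htrace : LinearMap.trace k V T = Fintype.card G * V.character x := by
    have hconj : ∀ t, LinearMap.trace k V (V.ρ (t * x * t⁻¹)) = V.character x :=
      fun t => V.char_conj x t
    simp only [T, map_sum, ← map_mul, hconj, sum_const, card_univ, nsmul_eq_mul]
  have hsum : ∑ t : G, V.character (t * x * t⁻¹ * y) = LinearMap.trace k V (T * V.ρ y) := by
    simp only [T, sum_mul, map_sum, ← map_mul, character]
  calc (Module.finrank k V : k) * ∑ t : G, V.character (t * x * t⁻¹ * y)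
      = LinearMap.trace k V (((Module.finrank k V : k) • T) * V.ρ y) := by
        rw [hsum, smul_mul_assoc, map_smul, smul_eq_mul]
    _ = LinearMap.trace k V T * V.character y := by
        rw [finrank_smul_eq_trace_smul_one V (Representation.commute_sum_conj V.ρ _),
          smul_mul_assoc, one_mul, map_smul, smul_eq_mul, character]
    _ = Fintype.card G * V.character x * V.character y := by rw [htrace]

theorem finrank_mul_sum_sum_char_commutator_mul (y : G) :
    (Module.finrank k V : k) * ∑ s : G, ∑ t : G, V.character (s * t * s⁻¹ * t⁻¹ * y)
      = Fintype.card G * ∑ t : G, V.character t * V.character (t⁻¹ * y) := by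
  have hassoc : ∀ s t : G, s * t * s⁻¹ * t⁻¹ * y = s * t * s⁻¹ * (t⁻¹ * y) :=
    fun _ _ => mul_assoc ..
  rw [sum_comm, mul_sum, mul_sum]
  refine sum_congr rfl fun t _ => ?_
  rw [sum_congr rfl fun s _ => congrArg V.character (hassoc s t), finrank_mul_sum_char_conj_mul,
    mul_assoc]

variable [Invertible (Nat.card G : k)]

theorem sum_char_mul_char_inv :
    ∑ x : G, V.character x * V.character x⁻¹ = Fintype.card G := by
  classical
  have h := char_orthonormal V V
  rw [if_pos ⟨Iso.refl V⟩, Nat.card_eq_fintype_card] at h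
  have hcard : (Fintype.card G : k) ≠ 0 := by
    rw [Fintype.card_eq_nat_card]
    exact Invertible.ne_zero _
  exact ((inv_mul_eq_one₀ hcard).mp h).symm

theorem finrank_mul_sum_char_mul_char_inv_mul (y : G) :
    (Module.finrank k V : k) * ∑ t : G, V.character t * V.character (t⁻¹ * y)
      = Fintype.card G * V.character y := by
  have hreindex : ∀ t : G, ∑ x : G, V.character x⁻¹ * V.character (t * x * t⁻¹ * y)
      = ∑ x : G, V.character x * V.character (x⁻¹ * y) := fun t =>
    Fintype.sum_equiv ((Equiv.inv G).trans (MulAut.conj t).toEquiv) _ _ fun x => by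
      simp only [Equiv.trans_apply, Equiv.inv_apply, MulEquiv.toEquiv_eq_coe,
        MulEquiv.coe_toEquiv, MulAut.conj_apply, char_conj, mul_inv_rev, inv_inv]
      group
  have hcard : (Fintype.card G : k) ≠ 0 := by
    rw [Fintype.card_eq_nat_card]
    exact Invertible.ne_zero _
  refine mul_left_cancel₀ hcard ?_
  calc (Fintype.card G : k)
        * ((Module.finrank k V : k) * ∑ t : G, V.character t * V.character (t⁻¹ * y))
      = (Module.finrank k V : k)
          * ∑ t : G, ∑ x : G, V.character x⁻¹ * V.character (t * x * t⁻¹ * y) := by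
        simp only [hreindex, sum_const, card_univ, nsmul_eq_mul]
        ring
    _ = ∑ x : G, V.character x⁻¹
          * ((Module.finrank k V : k) * ∑ t : G, V.character (t * x * t⁻¹ * y)) := by
        rw [sum_comm, mul_sum]
        simp only [mul_sum, mul_left_comm]
    _ = ∑ x : G, V.character x⁻¹ * (Fintype.card G * V.character x * V.character y) := by
        simp only [finrank_mul_sum_char_conj_mul]
    _ = Fintype.card G * (∑ x : G, V.character x * V.character x⁻¹) * V.character y := by
        rw [mul_sum, sum_mul]
        exact sum_congr rfl fun _ _ => by ring
    _ = Fintype.card G * (Fintype.card G * V.character y) := by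
        rw [sum_char_mul_char_inv, mul_assoc]

end FDRep

/-- For an irreducible complex representation `V` of a finite group `G` with character
`χ_V` (and `dim V = χ_V(1)`), and any `w ∈ G`,
`(dim V/|G|) · Σ_{s,t ∈ G} χ_V(s t s⁻¹ t⁻¹ w⁻¹) = (|G|/dim V) · χ_V(w⁻¹)`. -/
theorem char_commutator_double_sum
    (G : Type) [Group G] [Fintype G]
    (V : FDRep ℂ G) (hV : Simple V) (w : G) :
    (V.character 1 / (Fintype.card G : ℂ))
        * ∑ s : G, ∑ t : G, V.character (s * t * s⁻¹ * t⁻¹ * w⁻¹)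
      = ((Fintype.card G : ℂ) / V.character 1) * V.character w⁻¹ := by
  have hcard : (Fintype.card G : ℂ) ≠ 0 := Nat.cast_ne_zero.mpr Fintype.card_ne_zero
  have hdim : (Module.finrank ℂ V : ℂ) ≠ 0 := Nat.cast_ne_zero.mpr V.finrank_ne_zero_of_simple
  have : Invertible (Nat.card G : ℂ) := invertibleOfNonzero (by rwa [Nat.card_eq_fintype_card])
  have hcomm := V.finrank_mul_sum_sum_char_commutator_mul w⁻¹
  have hconv := V.finrank_mul_sum_char_mul_char_inv_mul w⁻¹
  rw [FDRep.char_one]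
  field_simp
  linear_combination (Module.finrank ℂ V : ℂ) * hcomm + (Fintype.card G : ℂ) * hconv
end

section
/- Let n ≥ 1, let γ ∈ ℂ be a primitive n-th root of unity, and let s, t be invertible n × n complex matrices with s t s⁻¹ t⁻¹ = γ · I_n. If w is an n × n complex matrix that commutes with both s and t (w s = s w and w t = t w), then w is a scalar multiple of the identity: w = c · I_n for some c ∈ ℂ. -/
/-!
Since `w` and `s` commute, they have a common eigenvector `v`, say `s v = μ v`. The relation
`s t = γ t s` makes each `tᵏ v` an eigenvector of `s` with eigenvalue `γᵏ μ`; as `γ` is a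
primitive `n`-th root of unity and `μ ≠ 0`, these `n` eigenvalues are distinct, so
`v, t v, …, tⁿ⁻¹ v` is a basis. Because `w` commutes with `t`, it acts on each `tᵏ v`
by the same scalar as on `v`.
-/

open Module Module.End

theorem mul_eq_smul_mul_of_commutator_eq_smul {R A : Type*} [CommSemiring R] [Semiring A]
    [Algebra R A] {a b : Aˣ} {γ : R} (h : (a : A) * b * ↑a⁻¹ * ↑b⁻¹ = γ • 1) :
    (a : A) * b = γ • (b * a) := by
  calc (a : A) * b = (a : A) * b * ↑a⁻¹ * ↑b⁻¹ * (b * a) := by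
        simp only [mul_assoc, Units.inv_mul_cancel_left, Units.inv_mul, mul_one]
    _ = γ • (b * a) := by rw [h, smul_mul_assoc, one_mul]

theorem mul_pow_eq_smul_pow_mul {R A : Type*} [CommSemiring R] [Semiring A] [Algebra R A]
    {a b : A} {γ : R} (h : a * b = γ • (b * a)) (k : ℕ) :
    a * b ^ k = γ ^ k • (b ^ k * a) := by
  induction k with
  | zero => simp
  | succ k ih =>
    rw [pow_succ, ← mul_assoc, ih, smul_mul_assoc, mul_assoc, h, mul_smul_comm, smul_smul,
      ← mul_assoc, ← pow_succ]

namespace Module.End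

variable {K V : Type*} [Field K] [AddCommGroup V] [Module K V]

theorem exists_hasEigenvector_of_commute [IsAlgClosed K] [FiniteDimensional K V] [Nontrivial V]
    {f g : End K V} (h : Commute f g) :
    ∃ v μ ν, f.HasEigenvector μ v ∧ g.HasEigenvector ν v := by
  obtain ⟨μ, hμ⟩ := f.exists_eigenvalue
  have : Nontrivial (f.eigenspace μ) := Submodule.nontrivial_iff_ne_bot.mpr hμ
  obtain ⟨ν, hν⟩ := exists_eigenvalue (g.restrict (mapsTo_genEigenspace_of_comm h μ 1))
  obtain ⟨⟨v, hvE⟩, hv⟩ := hν.exists_hasEigenvector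
  have hv0 : v ≠ 0 := by simpa using hv.2
  exact ⟨v, μ, ν, ⟨hvE, hv0⟩,
    mem_eigenspace_iff.mpr (congrArg Subtype.val hv.apply_eq_smul), hv0⟩

theorem HasEigenvector.pow_apply_of_mul_eq_smul_mul {S T : End K V} {γ μ : K} {v : V}
    (hST : S * T = γ • (T * S)) (hT : Function.Injective T) (hv : S.HasEigenvector μ v)
    (k : ℕ) : S.HasEigenvector (γ ^ k * μ) ((T ^ k) v) := by
  refine hasEigenvector_iff.mpr ⟨?_, ?_⟩
  · rw [mem_eigenspace_iff, ← mul_apply, mul_pow_eq_smul_pow_mul hST, LinearMap.smul_apply,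
      mul_apply, hv.apply_eq_smul, map_smul, smul_smul]
  · rw [coe_pow]
    exact (hT.iterate k).ne_iff' (by simp) |>.mpr hv.2

theorem linearIndependent_pow_apply_of_mul_eq_smul_mul {n : ℕ} {S T : End K V} {γ μ : K}
    {v : V} (hγ : IsPrimitiveRoot γ n) (hST : S * T = γ • (T * S))
    (hS : Function.Injective S) (hT : Function.Injective T) (hv : S.HasEigenvector μ v) :
    LinearIndependent K (fun k : Fin n ↦ (T ^ (k : ℕ)) v) := by
  have hμ : μ ≠ 0 := by
    rintro rfl
    exact hv.2 (hS (by simp [hv.apply_eq_smul]))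
  refine eigenvectors_linearIndependent' S (fun k : Fin n ↦ γ ^ (k : ℕ) * μ) ?_ _
    (hv.pow_apply_of_mul_eq_smul_mul hST hT ·)
  intro i j hij
  exact Fin.ext (hγ.pow_inj i.2 j.2 (mul_right_cancel₀ hμ hij))

theorem exists_eq_smul_one_of_commute_of_mul_eq_smul_mul [IsAlgClosed K] [FiniteDimensional K V]
    {S T W : End K V} {γ : K} (hγ : IsPrimitiveRoot γ (finrank K V))
    (hST : S * T = γ • (T * S)) (hS : Function.Injective S) (hT : Function.Injective T)
    (hWS : Commute W S) (hWT : Commute W T) : ∃ c : K, W = c • 1 := by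
  cases subsingleton_or_nontrivial V
  · exact ⟨0, Subsingleton.elim _ _⟩
  obtain ⟨v, μ, c, hSv, hWv⟩ := exists_hasEigenvector_of_commute hWS.symm
  let b := basisOfLinearIndependentOfCardEqFinrank' _
    (linearIndependent_pow_apply_of_mul_eq_smul_mul hγ hST hS hT hSv) (Fintype.card_fin _)
  refine ⟨c, b.ext fun k ↦ ?_⟩
  rw [coe_basisOfLinearIndependentOfCardEqFinrank']
  calc W ((T ^ (k : ℕ)) v) = (T ^ (k : ℕ)) (W v) := by
        rw [← mul_apply, (hWT.pow_right k).eq, mul_apply]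
    _ = (c • 1 : End K V) ((T ^ (k : ℕ)) v) := by simp [hWv.apply_eq_smul]

end Module.End

/-- Let `γ ∈ ℂ` be a primitive `n`-th root of unity (`γⁿ = 1` and `γᵐ ≠ 1` for
`0 < m < n`) and let `s, t` be invertible `n × n` complex matrices with
`s t s⁻¹ t⁻¹ = γ • I_n`.  Then any matrix `w` commuting with both `s` and `t` is a
scalar multiple of the identity. -/
theorem commuting_with_projective_commutator_pair_is_scalar
    (n : ℕ) (hn : 1 ≤ n) (γ : ℂ)
    (hγ : γ ^ n = 1 ∧ ∀ m : ℕ, 0 < m → m < n → γ ^ m ≠ 1)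
    (s t : (Matrix (Fin n) (Fin n) ℂ)ˣ)
    (h : ((s : Matrix (Fin n) (Fin n) ℂ) * t * (↑s⁻¹ : Matrix (Fin n) (Fin n) ℂ)
            * (↑t⁻¹ : Matrix (Fin n) (Fin n) ℂ))
          = γ • (1 : Matrix (Fin n) (Fin n) ℂ))
    (w : Matrix (Fin n) (Fin n) ℂ)
    (hws : w * s = (s : Matrix (Fin n) (Fin n) ℂ) * w)
    (hwt : w * t = (t : Matrix (Fin n) (Fin n) ℂ) * w) :
    ∃ c : ℂ, w = c • (1 : Matrix (Fin n) (Fin n) ℂ) := by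
  let e : Matrix (Fin n) (Fin n) ℂ ≃ₐ[ℂ] End ℂ (Fin n → ℂ) := Matrix.toLinAlgEquiv'
  have he : ∀ u : (Matrix (Fin n) (Fin n) ℂ)ˣ, Function.Injective (e u) := fun u ↦
    ((isUnit_iff _).mp (u.isUnit.map e)).1
  have hγprim : IsPrimitiveRoot γ (finrank ℂ (Fin n → ℂ)) := by
    simpa using IsPrimitiveRoot.mk_of_lt γ hn hγ.1 hγ.2
  have hST : e s * e t = γ • (e t * e s) := by
    rw [← map_mul, ← map_mul, mul_eq_smul_mul_of_commutator_eq_smul h, map_smul]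
  obtain ⟨c, hc⟩ := exists_eq_smul_one_of_commute_of_mul_eq_smul_mul hγprim hST (he s) (he t)
    (Commute.map hws e) (Commute.map hwt e)
  exact ⟨c, e.injective (by rw [hc, map_smul, map_one])⟩
end

section
/- Let n ≥ 1, g ≥ 1, let γ ∈ ℂ be a primitive n-th root of unity, and let s₁, t₁, …, s_g, t_g be invertible n × n complex matrices with [s₁,t₁][s₂,t₂]⋯[s_g,t_g] = γ · I_n. If w is an n × n complex matrix commuting with every sᵢ and every tᵢ, then w = c · I_n for some c ∈ ℂ. Consequently, if additionally trace(w) = 0, then w = 0; and the isotropy subgroup of the conjugation action of U_n at any such tuple consists exactly of the scalar unitary matrices. -/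
open LinearMap Module Set

private lemma restrict_congr_aux {M : Type*} [AddCommGroup M] [Module ℂ M]
    {E : Submodule ℂ M} {f g : Module.End ℂ M} (hfg : f = g)
    (hf : Set.MapsTo f E E) (hg : Set.MapsTo g E E) :
    f.restrict hf = g.restrict hg := by subst hfg; rfl

private lemma det_restrict_mul_aux {M : Type*} [AddCommGroup M] [Module ℂ M]
    {E : Submodule ℂ M} {A B : Module.End ℂ M}
    (hA : Set.MapsTo A E E) (hB : Set.MapsTo B E E) (hAB : Set.MapsTo (A * B) E E) :
    LinearMap.det ((A * B).restrict hAB)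
      = LinearMap.det (A.restrict hA) * LinearMap.det (B.restrict hB) := by
  have : (A * B).restrict hAB = (A.restrict hA) ∘ₗ (B.restrict hB) := rfl
  rw [this, LinearMap.det_comp]

private lemma aux_prod_mapsTo {M : Type*} [AddCommGroup M] [Module ℂ M]
    (E : Submodule ℂ M) (L : List (Module.End ℂ M))
    (h1 : ∀ a ∈ L, Set.MapsTo a E E) : Set.MapsTo (L.prod) E E := by
  induction L with
  | nil => intro x hx; simpa using hx
  | cons a L ih =>
    rw [List.prod_cons]
    exact (h1 a (by simp)).comp (ih (fun b hb => h1 b (by simp [hb])))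

private lemma aux_det_restrict_prod {M : Type*} [AddCommGroup M] [Module ℂ M]
    (E : Submodule ℂ M) (L : List (Module.End ℂ M))
    (h1 : ∀ a ∈ L, Set.MapsTo a E E)
    (hd : ∀ a, (ha : a ∈ L) → LinearMap.det (LinearMap.restrict a (h1 a ha)) = 1)
    (hp : Set.MapsTo (L.prod) E E) :
    LinearMap.det (LinearMap.restrict L.prod hp) = 1 := by
  induction L with
  | nil =>
    have : (List.prod ([] : List (Module.End ℂ M))).restrict hp = LinearMap.id := rfl
    rw [this]; exact LinearMap.det_id
  | cons a L ih =>
    have hL : ∀ b ∈ L, Set.MapsTo b E E := fun b hb => h1 b (by simp [hb])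
    have hpL : Set.MapsTo L.prod E E := aux_prod_mapsTo E L hL
    have hpa : Set.MapsTo a E E := h1 a (by simp)
    have hmul : Set.MapsTo (a * L.prod) E E := hpa.comp hpL
    rw [restrict_congr_aux List.prod_cons hp hmul,
      det_restrict_mul_aux hpa hpL hmul, hd a (by simp),
      ih hL (fun b hb => hd b (by simp [hb])) hpL, one_mul]

private lemma key_scalar (n g : ℕ) (hn : 1 ≤ n) (γ : ℂ)
    (hγ : γ ^ n = 1 ∧ ∀ m : ℕ, 0 < m → m < n → γ ^ m ≠ 1)
    (s t : Fin g → (Matrix (Fin n) (Fin n) ℂ)ˣ)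
    (h : (List.ofFn fun i =>
          ((s i : Matrix (Fin n) (Fin n) ℂ) * (t i) * (↑(s i)⁻¹ : Matrix (Fin n) (Fin n) ℂ)
            * (↑(t i)⁻¹ : Matrix (Fin n) (Fin n) ℂ))).prod
        = γ • (1 : Matrix (Fin n) (Fin n) ℂ))
    (w : Matrix (Fin n) (Fin n) ℂ)
    (hw : ∀ i, w * s i = (s i : Matrix (Fin n) (Fin n) ℂ) * w
            ∧ w * t i = (t i : Matrix (Fin n) (Fin n) ℂ) * w) :
    ∃ c : ℂ, w = c • (1 : Matrix (Fin n) (Fin n) ℂ) := by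
  haveI : Nonempty (Fin n) := ⟨⟨0, hn⟩⟩
  set φ : Matrix (Fin n) (Fin n) ℂ ≃ₐ[ℂ] Module.End ℂ (Fin n → ℂ) := Matrix.toLinAlgEquiv'
    with hφ
  set f : Module.End ℂ (Fin n → ℂ) := φ w with hf
  obtain ⟨c, hc⟩ := Module.End.exists_eigenvalue f
  set E := f.eigenspace c with hE
  -- any endomorphism commuting with f maps E into E
  have comm_maps : ∀ A : Module.End ℂ (Fin n → ℂ), f * A = A * f → Set.MapsTo A E E := by
    intro A hA x hx
    rw [SetLike.mem_coe, Module.End.mem_eigenspace_iff] at hx ⊢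
    calc f (A x) = (f * A) x := rfl
      _ = A (f x) := by rw [hA]; rfl
      _ = c • A x := by rw [hx, map_smul]
  have lift : ∀ a : Matrix (Fin n) (Fin n) ℂ, w * a = a * w → Set.MapsTo (φ a) E E := by
    intro a ha
    exact comm_maps (φ a) (by rw [hf, ← map_mul, ← map_mul, ha])
  -- maps-to facts for the generators and their inverses
  have hsm : ∀ i, Set.MapsTo (φ (s i : Matrix (Fin n) (Fin n) ℂ)) E E :=
    fun i => lift _ (hw i).1
  have hsm' : ∀ i, Set.MapsTo (φ (↑(s i)⁻¹ : Matrix (Fin n) (Fin n) ℂ)) E E :=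
    fun i => lift _ ((Commute.units_inv_right ((hw i).1 : Commute w ((s i : Matrix (Fin n) (Fin n) ℂ)))) : _)
  have htm : ∀ i, Set.MapsTo (φ (t i : Matrix (Fin n) (Fin n) ℂ)) E E :=
    fun i => lift _ (hw i).2
  have htm' : ∀ i, Set.MapsTo (φ (↑(t i)⁻¹ : Matrix (Fin n) (Fin n) ℂ)) E E :=
    fun i => lift _ ((Commute.units_inv_right ((hw i).2 : Commute w ((t i : Matrix (Fin n) (Fin n) ℂ)))) : _)
  -- determinant of inverse pairs
  have detinv : ∀ u : (Matrix (Fin n) (Fin n) ℂ)ˣ,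
      ∀ (h1 : Set.MapsTo (φ (u : Matrix (Fin n) (Fin n) ℂ)) E E)
        (h2 : Set.MapsTo (φ (↑u⁻¹ : Matrix (Fin n) (Fin n) ℂ)) E E),
      LinearMap.det ((φ (u : Matrix (Fin n) (Fin n) ℂ)).restrict h1)
        * LinearMap.det ((φ (↑u⁻¹ : Matrix (Fin n) (Fin n) ℂ)).restrict h2) = 1 := by
    intro u h1 h2
    have hone : φ (u : Matrix (Fin n) (Fin n) ℂ) * φ (↑u⁻¹ : Matrix (Fin n) (Fin n) ℂ)
        = 1 := by rw [← map_mul, Units.mul_inv, map_one]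
    have hm : Set.MapsTo (φ (u : Matrix (Fin n) (Fin n) ℂ)
        * φ (↑u⁻¹ : Matrix (Fin n) (Fin n) ℂ)) E E := h1.comp h2
    have hid : Set.MapsTo (1 : Module.End ℂ (Fin n → ℂ)) E E := fun x hx => hx
    rw [← det_restrict_mul_aux h1 h2 hm, restrict_congr_aux hone hm hid]
    have : (1 : Module.End ℂ (Fin n → ℂ)).restrict hid = LinearMap.id := rfl
    rw [this, LinearMap.det_id]
  -- the list of commutators in End
  set L : List (Module.End ℂ (Fin n → ℂ)) :=
    List.ofFn (fun i => φ ((s i : Matrix (Fin n) (Fin n) ℂ) * (t i)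
      * (↑(s i)⁻¹ : Matrix (Fin n) (Fin n) ℂ) * (↑(t i)⁻¹ : Matrix (Fin n) (Fin n) ℂ)))
    with hL
  have hmem : ∀ a ∈ L, ∃ i : Fin g,
      a = φ ((s i : Matrix (Fin n) (Fin n) ℂ) * (t i)
        * (↑(s i)⁻¹ : Matrix (Fin n) (Fin n) ℂ) * (↑(t i)⁻¹ : Matrix (Fin n) (Fin n) ℂ)) := by
    intro a ha
    rw [hL, List.mem_ofFn] at ha
    obtain ⟨i, hi⟩ := ha
    exact ⟨i, hi.symm⟩
  have h1 : ∀ a ∈ L, Set.MapsTo a E E := by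
    intro a ha
    obtain ⟨i, rfl⟩ := hmem a ha
    rw [map_mul, map_mul, map_mul]
    exact ((((hsm i).comp (htm i)).comp (hsm' i)).comp (htm' i))
  have hd : ∀ a, (ha : a ∈ L) → LinearMap.det (LinearMap.restrict a (h1 a ha)) = 1 := by
    intro a ha
    obtain ⟨i, rfl⟩ := hmem a ha
    set A := φ (s i : Matrix (Fin n) (Fin n) ℂ)
    set A' := φ (↑(s i)⁻¹ : Matrix (Fin n) (Fin n) ℂ)
    set B := φ (t i : Matrix (Fin n) (Fin n) ℂ)
    set B' := φ (↑(t i)⁻¹ : Matrix (Fin n) (Fin n) ℂ)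
    have e1 : φ ((s i : Matrix (Fin n) (Fin n) ℂ) * (t i)
        * (↑(s i)⁻¹ : Matrix (Fin n) (Fin n) ℂ) * (↑(t i)⁻¹ : Matrix (Fin n) (Fin n) ℂ))
        = A * B * A' * B' := by rw [map_mul, map_mul, map_mul]
    have mAB : Set.MapsTo (A * B) E E := (hsm i).comp (htm i)
    have mABA : Set.MapsTo (A * B * A') E E := mAB.comp (hsm' i)
    have mABAB : Set.MapsTo (A * B * A' * B') E E := mABA.comp (htm' i)
    rw [restrict_congr_aux e1 (h1 _ ha) mABAB,
      det_restrict_mul_aux mABA (htm' i) mABAB,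
      det_restrict_mul_aux mAB (hsm' i) mABA,
      det_restrict_mul_aux (hsm i) (htm i) mAB]
    calc LinearMap.det (A.restrict (hsm i)) * LinearMap.det (B.restrict (htm i))
          * LinearMap.det (A'.restrict (hsm' i)) * LinearMap.det (B'.restrict (htm' i))
        = (LinearMap.det (A.restrict (hsm i)) * LinearMap.det (A'.restrict (hsm' i)))
          * (LinearMap.det (B.restrict (htm i)) * LinearMap.det (B'.restrict (htm' i))) := by
          ring
      _ = 1 := by rw [detinv (s i) (hsm i) (hsm' i), detinv (t i) (htm i) (htm' i), one_mul]

  -- the product of the list is γ • 1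
  have hprod : L.prod = γ • (1 : Module.End ℂ (Fin n → ℂ)) := by
    have : L = (List.ofFn fun i =>
        ((s i : Matrix (Fin n) (Fin n) ℂ) * (t i) * (↑(s i)⁻¹ : Matrix (Fin n) (Fin n) ℂ)
          * (↑(t i)⁻¹ : Matrix (Fin n) (Fin n) ℂ))).map φ := by
      rw [List.map_ofFn]; rfl
    rw [this, ← map_list_prod φ, h, map_smul, map_one]
  have hpsm : Set.MapsTo (γ • (1 : Module.End ℂ (Fin n → ℂ))) E E := by
    intro x hx
    rw [SetLike.mem_coe]
    exact E.smul_mem γ hx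
  have hp : Set.MapsTo L.prod E E := aux_prod_mapsTo E L h1
  have hdet1 : LinearMap.det (L.prod.restrict hp) = 1 := aux_det_restrict_prod E L h1 hd hp
  rw [restrict_congr_aux hprod hp hpsm, LinearMap.restrict_smul_one] at hdet1
  rw [LinearMap.det_smul, map_one LinearMap.det, mul_one] at hdet1
  -- so γ ^ (finrank E) = 1 and hence finrank E = n
  haveI : Nontrivial E := Submodule.nontrivial_iff_ne_bot.mpr hc
  have hpos : 0 < Module.finrank ℂ E := Module.finrank_pos
  have hle : Module.finrank ℂ E ≤ n := by
    simpa [Module.finrank_fin_fun] using Submodule.finrank_le E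
  have heq : Module.finrank ℂ E = n := by
    rcases lt_or_eq_of_le hle with hlt | hEq
    · exact absurd hdet1 (hγ.2 _ hpos hlt)
    · exact hEq
  have hEtop : E = ⊤ := Submodule.eq_top_of_finrank_eq (by
    rw [heq, Module.finrank_fin_fun])
  -- conclude
  refine ⟨c, ?_⟩
  apply φ.injective
  refine LinearMap.ext fun x => ?_
  have hx : x ∈ E := hEtop ▸ Submodule.mem_top
  rw [Module.End.mem_eigenspace_iff] at hx
  rw [map_smul, map_one]
  exact hx

/-- Let `γ ∈ ℂ` be a primitive `n`-th root of unity and let `s₁,t₁,…,s_g,t_g` be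
invertible `n × n` complex matrices with `[s₁,t₁]⋯[s_g,t_g] = γ • I_n`.  Then any matrix
`w` commuting with every `sᵢ` and every `tᵢ` is a scalar multiple of the identity;
consequently, if moreover `trace(w) = 0` then `w = 0`, and any unitary matrix commuting
with every `sᵢ` and `tᵢ` (i.e. any element of the isotropy group of the conjugation
action of `U_n` at the tuple) is a scalar unitary matrix. -/
theorem isotropy_of_tuple_is_central
    (n g : ℕ) (hn : 1 ≤ n) (hg : 1 ≤ g) (γ : ℂ)
    (hγ : γ ^ n = 1 ∧ ∀ m : ℕ, 0 < m → m < n → γ ^ m ≠ 1)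
    (s t : Fin g → (Matrix (Fin n) (Fin n) ℂ)ˣ)
    (h : (List.ofFn fun i =>
          ((s i : Matrix (Fin n) (Fin n) ℂ) * (t i) * (↑(s i)⁻¹ : Matrix (Fin n) (Fin n) ℂ)
            * (↑(t i)⁻¹ : Matrix (Fin n) (Fin n) ℂ))).prod
        = γ • (1 : Matrix (Fin n) (Fin n) ℂ)) :
    (∀ w : Matrix (Fin n) (Fin n) ℂ,
        (∀ i, w * s i = (s i : Matrix (Fin n) (Fin n) ℂ) * w
            ∧ w * t i = (t i : Matrix (Fin n) (Fin n) ℂ) * w) →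
        ∃ c : ℂ, w = c • (1 : Matrix (Fin n) (Fin n) ℂ))
    ∧
    (∀ w : Matrix (Fin n) (Fin n) ℂ,
        (∀ i, w * s i = (s i : Matrix (Fin n) (Fin n) ℂ) * w
            ∧ w * t i = (t i : Matrix (Fin n) (Fin n) ℂ) * w) →
        w.trace = 0 → w = 0)
    ∧
    (∀ u : Matrix (Fin n) (Fin n) ℂ, u ∈ Matrix.unitaryGroup (Fin n) ℂ →
        (∀ i, u * s i = (s i : Matrix (Fin n) (Fin n) ℂ) * u
            ∧ u * t i = (t i : Matrix (Fin n) (Fin n) ℂ) * u) →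
        ∃ c : ℂ, u = c • (1 : Matrix (Fin n) (Fin n) ℂ)) := by
  refine ⟨fun w hw => key_scalar n g hn γ hγ s t h w hw, ?_, ?_⟩
  · intro w hw htr
    obtain ⟨c, rfl⟩ := key_scalar n g hn γ hγ s t h w hw
    rw [Matrix.trace_smul, Matrix.trace_one] at htr
    have hn0 : (Fintype.card (Fin n) : ℂ) ≠ 0 := by
      simp only [Fintype.card_fin]
      exact_mod_cast Nat.cast_ne_zero.mpr (by omega)
    have hc : c = 0 := by
      rcases (by simpa [smul_eq_mul] using htr : c = 0 ∨ (n : ℂ) = 0) with h0 | h0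
      · exact h0
      · exact absurd (by simpa [Fintype.card_fin] using h0 : (Fintype.card (Fin n) : ℂ) = 0) hn0
    rw [hc, zero_smul]
  · intro u _ hu
    exact key_scalar n g hn γ hγ s t h u hu
end
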